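/- arXiv:1712.07333 — 5 statements merged into one kernel-verified Lean document; each statement's English description precedes it below -/
import Mathlib

section
/- Let b, μ, λ, a₀ ∈ ℝ with Δ := λ² - 4μ > 0, and define c = -a₀ - 8bμ - bλ² and u(x,t) = a₀ + 3bλ² - 3bΔ tanh²((√Δ/2)(x + ct)). Then u satisfies the KdV equation u_t + u u_x + b u_{xxx} = 0. -/
/-!
The wave is a travelling wave `u x t = φ (x + c t)` with `φ ξ = A - 12 b k² tanh² (k ξ)`, where
`k = √Δ / 2` and `A = a₀ + 3 b λ²`, so the KdV equation reduces to the ODE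
`(c + φ) φ' + b φ''' = 0`. Since `tanh' = 1 - tanh²`, every derivative of `φ` is a polynomial in
`tanh (k ξ)`, and the ODE becomes a polynomial identity which holds exactly when `c + A = 8 b k²`.
-/

open Real Polynomial

theorem Real.hasDerivAt_tanh (x : ℝ) : HasDerivAt tanh (1 - tanh x ^ 2) x := by
  have h := (hasDerivAt_sinh x).div (hasDerivAt_cosh x) (cosh_pos x).ne'
  rw [show sinh / cosh = tanh from funext fun y => (tanh_eq_sinh_div_cosh y).symm] at h
  refine h.congr_deriv ?_
  rw [tanh_eq_sinh_div_cosh]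
  field_simp

noncomputable def tanhDerivative (k : ℝ) (p : ℝ[X]) : ℝ[X] :=
  C k * (1 - X ^ 2) * derivative p

theorem hasDerivAt_eval_tanh_mul (p : ℝ[X]) (k ξ : ℝ) :
    HasDerivAt (fun ξ => p.eval (tanh (k * ξ))) ((tanhDerivative k p).eval (tanh (k * ξ))) ξ := by
  have h := (p.hasDerivAt _).comp ξ ((hasDerivAt_tanh _).comp ξ ((hasDerivAt_id ξ).const_mul k))
  refine h.congr_deriv ?_
  simp only [tanhDerivative, eval_mul, eval_C, eval_sub, eval_one, eval_pow, eval_X,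
    Function.comp_apply, id]
  ring

theorem deriv_eval_tanh_mul (p : ℝ[X]) (k : ℝ) :
    deriv (fun ξ => p.eval (tanh (k * ξ))) = fun ξ => (tanhDerivative k p).eval (tanh (k * ξ)) :=
  funext fun ξ => (hasDerivAt_eval_tanh_mul p k ξ).deriv

noncomputable def kdvSoliton (b k A ξ : ℝ) : ℝ :=
  A - 12 * b * k ^ 2 * tanh (k * ξ) ^ 2

theorem kdvSoliton_eq_eval (b k A : ℝ) :
    kdvSoliton b k A = fun ξ => (C A - C (12 * b * k ^ 2) * X ^ 2).eval (tanh (k * ξ)) := by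
  funext ξ
  simp [kdvSoliton]

theorem differentiable_kdvSoliton (b k A : ℝ) : Differentiable ℝ (kdvSoliton b k A) := by
  rw [kdvSoliton_eq_eval]
  exact fun ξ => (hasDerivAt_eval_tanh_mul _ k ξ).differentiableAt

theorem kdvSoliton_ode {b k A c : ℝ} (hc : c + A = 8 * b * k ^ 2) (ξ : ℝ) :
    (c + kdvSoliton b k A ξ) * deriv (kdvSoliton b k A) ξ +
      b * deriv (deriv (deriv (kdvSoliton b k A))) ξ = 0 := by
  simp only [kdvSoliton_eq_eval, deriv_eval_tanh_mul]
  simp only [tanhDerivative, derivative_mul, derivative_sub, derivative_add, derivative_C,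
    derivative_one, derivative_X_pow, derivative_zero, eval_mul, eval_sub, eval_add,
    eval_C, eval_one, eval_pow, eval_X, eval_zero]
  linear_combination (-24 * b * k ^ 3 * tanh (k * ξ) * (1 - tanh (k * ξ) ^ 2)) * hc

theorem kdv_of_travelingWave {φ : ℝ → ℝ} {b c : ℝ} (hφ : Differentiable ℝ φ)
    (hode : ∀ ξ, (c + φ ξ) * deriv φ ξ + b * deriv (deriv (deriv φ)) ξ = 0) (x t : ℝ) :
    deriv (fun s => φ (x + c * s)) t + φ (x + c * t) * deriv (fun y => φ (y + c * t)) x +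
      b * deriv (fun y => deriv (fun z => deriv (fun w => φ (w + c * t)) z) y) x = 0 := by
  have ht : HasDerivAt (fun s => φ (x + c * s)) (c * deriv φ (x + c * t)) t := by
    refine ((hφ _).hasDerivAt.comp t (((hasDerivAt_id t).const_mul c).const_add x)).congr_deriv ?_
    simp only [id, mul_one]
    ring
  simp only [ht.deriv, deriv_comp_add_const]
  linear_combination hode (x + c * t)

theorem stmt7 (b mu lam a0 c : ℝ) (hd : lam ^ 2 - 4 * mu > 0)
    (hc : c = -a0 - 8 * b * mu - b * lam ^ 2)
    (u : ℝ → ℝ → ℝ)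
    (hu : ∀ x t : ℝ, u x t = a0 + 3 * b * lam ^ 2 -
      3 * b * (lam ^ 2 - 4 * mu) *
        Real.tanh (Real.sqrt (lam ^ 2 - 4 * mu) / 2 * (x + c * t)) ^ 2) :
    ∀ x t : ℝ,
      deriv (fun s => u x s) t + u x t * deriv (fun y => u y t) x +
        b * deriv (fun y => deriv (fun z => deriv (fun w => u w t) z) y) x = 0 := by
  set k := √(lam ^ 2 - 4 * mu) / 2
  have hk : 4 * k ^ 2 = lam ^ 2 - 4 * mu := by
    rw [div_pow, sq_sqrt hd.le]; ring
  have hu_eq : u = fun x t => kdvSoliton b k (a0 + 3 * b * lam ^ 2) (x + c * t) := by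
    ext x t
    rw [hu, kdvSoliton, ← hk]
    ring
  subst hu_eq
  exact kdv_of_travelingWave (differentiable_kdvSoliton _ _ _)
    (kdvSoliton_ode (by linear_combination hc - 2 * b * hk))
end

section
/- Let b, μ, λ, a₀ ∈ ℝ with Δ := 4μ - λ² > 0, and define c = -a₀ - 8bμ - bλ² and u(x,t) = a₀ + 3bλ² - 3bΔ tan²((√Δ/2)(x + ct)). Then at every point (x,t) where cos((√Δ/2)(x + ct)) ≠ 0, u satisfies u_t + u u_x + b u_{xxx} = 0. -/
/-!
With `k = √(4μ - λ²) / 2`, the solution is a travelling wave `u x t = φ (x + c t)` with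
`φ ξ = P (tan (k ξ))` for the quadratic `P = A + B X²`, so the equation reduces to the ODE
`(c + φ) φ' + b φ''' = 0`. As `tan' = 1 + tan²`, each derivative of `P (tan (k ξ))` is again a
polynomial in `tan (k ξ)`, obtained by applying `P ↦ k (1 + X²) P'`. The ODE thus becomes a
polynomial identity in `T = tan (k ξ)`, which holds as soon as `B = -12 b k²` and
`c + A = -8 b k²`, and these are exactly the amplitude and speed of the given solution.
-/

open Real Polynomial Filter Topology

noncomputable def tanDeriv (k : ℝ) (P : ℝ[X]) : ℝ[X] := C k * (1 + X ^ 2) * derivative P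

theorem hasDerivAt_eval_tan (k : ℝ) (P : ℝ[X]) {ξ : ℝ} (h : cos (k * ξ) ≠ 0) :
    HasDerivAt (fun ξ => P.eval (tan (k * ξ))) ((tanDeriv k P).eval (tan (k * ξ))) ξ := by
  have hlin : HasDerivAt (fun ξ => k * ξ) k ξ := by simpa using (hasDerivAt_id ξ).const_mul k
  refine ((P.hasDerivAt _).comp ξ ((hasDerivAt_tan h).comp ξ hlin)).congr_deriv ?_
  rw [tanDeriv, Function.comp_apply, one_div, ← inv_one_add_tan_sq h, inv_inv]
  simp only [eval_mul, eval_C, eval_add, eval_one, eval_pow, eval_X]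
  ring

theorem iteratedDeriv_eval_tan (k : ℝ) (P : ℝ[X]) (n : ℕ) {ξ : ℝ} (h : cos (k * ξ) ≠ 0) :
    iteratedDeriv n (fun ξ => P.eval (tan (k * ξ))) ξ
      = ((tanDeriv k)^[n] P).eval (tan (k * ξ)) := by
  induction n generalizing ξ with
  | zero => simp
  | succ n ih =>
    have hopen : IsOpen {ξ : ℝ | cos (k * ξ) ≠ 0} :=
      isOpen_ne_fun (by fun_prop) continuous_const
    have heq : iteratedDeriv n (fun ξ => P.eval (tan (k * ξ)))
        =ᶠ[𝓝 ξ] fun ξ => ((tanDeriv k)^[n] P).eval (tan (k * ξ)) :=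
      eventually_of_mem (hopen.mem_nhds h) fun _ => ih
    rw [iteratedDeriv_succ, heq.deriv_eq, Function.iterate_succ_apply']
    exact (hasDerivAt_eval_tan k _ h).deriv

theorem tanSq_profile_ode (A B k b c T : ℝ) (hB : B = -12 * b * k ^ 2)
    (hA : c + A = -8 * b * k ^ 2) :
    (c + (C A + C B * X ^ 2).eval T) * (tanDeriv k (C A + C B * X ^ 2)).eval T
      + b * ((tanDeriv k)^[3] (C A + C B * X ^ 2)).eval T = 0 := by
  simp only [tanDeriv, Function.iterate_succ, Function.iterate_zero, id_eq, Function.comp_apply,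
    derivative_mul, derivative_C, derivative_X_pow_succ, derivative_X, derivative_one,
    eval_add, eval_mul, eval_C, eval_pow, eval_X, eval_one, map_add, map_one,
    Nat.cast_one, pow_one, zero_mul, mul_zero, zero_add, add_zero, mul_one]
  -- the left side is `2 B k T (1 + T²) ((c + A + 8 b k²) + (B + 12 b k²) T²)`
  linear_combination 2 * B * k * T * (1 + T ^ 2) * (hA + T ^ 2 * hB)

theorem kdv_travellingWave_eq (φ : ℝ → ℝ) (b c x t : ℝ) :
    deriv (fun s => φ (x + c * s)) t + φ (x + c * t) * deriv (fun y => φ (y + c * t)) x +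
        b * deriv (fun y => deriv (fun z => deriv (fun w => φ (w + c * t)) z) y) x
      = (c + φ (x + c * t)) * deriv φ (x + c * t) + b * iteratedDeriv 3 φ (x + c * t) := by
  have ht : deriv (fun s => φ (x + c * s)) t = c * deriv φ (x + c * t) := by
    rw [deriv_comp_mul_left c (fun y => φ (x + y)), deriv_comp_const_add, smul_eq_mul]
  have hxxx : deriv (fun y => deriv (fun z => deriv (fun w => φ (w + c * t)) z) y) x
      = iteratedDeriv 3 φ (x + c * t) := by
    rw [← congrFun (iteratedDeriv_comp_add_const 3 φ (c * t)) x]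
    simp only [iteratedDeriv_succ, iteratedDeriv_zero]
  rw [ht, deriv_comp_add_const, hxxx]
  ring

theorem stmt9 (b mu lam a0 c : ℝ) (hd : 4 * mu - lam ^ 2 > 0)
    (hc : c = -a0 - 8 * b * mu - b * lam ^ 2)
    (u : ℝ → ℝ → ℝ)
    (hu : ∀ x t : ℝ, u x t = a0 + 3 * b * lam ^ 2 -
      3 * b * (4 * mu - lam ^ 2) *
        Real.tan (Real.sqrt (4 * mu - lam ^ 2) / 2 * (x + c * t)) ^ 2) :
    ∀ x t : ℝ, Real.cos (Real.sqrt (4 * mu - lam ^ 2) / 2 * (x + c * t)) ≠ 0 →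
      deriv (fun s => u x s) t + u x t * deriv (fun y => u y t) x +
        b * deriv (fun y => deriv (fun z => deriv (fun w => u w t) z) y) x = 0 := by
  intro x t hcos
  set k := √(4 * mu - lam ^ 2) / 2
  have hk : 4 * k ^ 2 = 4 * mu - lam ^ 2 := by
    rw [div_pow, sq_sqrt hd.le]
    ring
  set P : ℝ[X] := C (a0 + 3 * b * lam ^ 2) + C (-(3 * b * (4 * mu - lam ^ 2))) * X ^ 2
  obtain rfl : u = fun x t => P.eval (tan (k * (x + c * t))) := by
    funext x t
    simp only [hu, P, eval_add, eval_mul, eval_C, eval_pow, eval_X]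
    ring
  refine (kdv_travellingWave_eq (fun ξ => P.eval (tan (k * ξ))) b c x t).trans ?_
  rw [(hasDerivAt_eval_tan k P hcos).deriv, iteratedDeriv_eval_tan k P 3 hcos]
  exact tanSq_profile_ode _ _ k b c _ (by linear_combination 3 * b * hk)
    (by linear_combination hc + 2 * b * hk)
end

section
/- Let b, λ, a₀, A, B ∈ ℝ with B ≠ 0, μ = λ²/4, c = -a₀ - 8bμ - bλ², and define u(x,t) = a₀ + 3bλ² - 12bB²/(A + B(x + ct))². Then at every point (x,t) with A + B(x + ct) ≠ 0, u satisfies the KdV equation u_t + u u_x + b u_{xxx} = 0. -/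
/-!
The solution is a travelling wave `u x t = f (x + c t)`, so the KdV equation reduces to the ODE
`(c + f) f' + b f''' = 0`. For `f ξ = a - 12 b B² (A + B ξ)⁻²` with `a = a₀ + 3 b λ²`, the relation
`μ = λ² / 4` makes `c = -a`, and then `(c + f) f' = -288 b² B⁵ (A + B ξ)⁻⁵ = -b f'''`.
-/

/-- Also true at the pole `c * x + d = 0`, where both sides are junk `0`. -/
theorem deriv_linear_zpow {𝕜 : Type*} [NontriviallyNormedField 𝕜] (m : ℤ) (c d x : 𝕜) :
    deriv (fun y => (c * y + d) ^ m) x = m * c * (c * x + d) ^ (m - 1) := by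
  rw [deriv_comp_mul_left c (fun y => (y + d) ^ m) x, deriv_comp_add_const (· ^ m), deriv_zpow]
  ring

theorem deriv_comp_const_add_mul {𝕜 : Type*} [NontriviallyNormedField 𝕜] (f : 𝕜 → 𝕜)
    (a c x : 𝕜) : deriv (fun s => f (a + c * s)) x = c * deriv f (a + c * x) := by
  rw [deriv_comp_mul_left c (fun y => f (a + y)) x, deriv_comp_const_add, smul_eq_mul]

noncomputable def kdvResidual (b : ℝ) (u : ℝ → ℝ → ℝ) (x t : ℝ) : ℝ :=
  deriv (fun s => u x s) t + u x t * deriv (fun y => u y t) x +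
    b * deriv (fun y => deriv (fun z => deriv (fun w => u w t) z) y) x

theorem kdvResidual_of_travelingWave {u : ℝ → ℝ → ℝ} {f : ℝ → ℝ} {c : ℝ}
    (hu : ∀ y s, u y s = f (y + c * s)) (b x t : ℝ) :
    kdvResidual b u x t =
      (c + f (x + c * t)) * deriv f (x + c * t) + b * deriv (deriv (deriv f)) (x + c * t) := by
  obtain rfl : u = fun y s => f (y + c * s) := funext₂ hu
  simp only [kdvResidual, deriv_comp_add_const, deriv_comp_const_add_mul]
  ring

noncomputable def rationalProfile (a b A B ξ : ℝ) : ℝ :=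
  a - 12 * b * B ^ 2 / (A + B * ξ) ^ 2

theorem rationalProfile_eq_zpow (a b A B : ℝ) :
    rationalProfile a b A B = fun ξ => a + -(12 * b * B ^ 2) * (B * ξ + A) ^ (-2 : ℤ) := by
  funext ξ
  rw [rationalProfile, zpow_neg, zpow_ofNat, add_comm (B * ξ)]
  ring

theorem rationalProfile_travelingWave_ode (a b A B ξ : ℝ) :
    (-a + rationalProfile a b A B ξ) * deriv (rationalProfile a b A B) ξ +
      b * deriv (deriv (deriv (rationalProfile a b A B))) ξ = 0 := by
  simp only [rationalProfile_eq_zpow, deriv_const_add', deriv_const_mul_field', deriv_linear_zpow]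
  generalize B * ξ + A = y
  norm_num [zpow_neg]
  ring

theorem stmt10_general (b lam a0 A B mu c : ℝ)
    (hmu : mu = lam ^ 2 / 4) (hc : c = -a0 - 8 * b * mu - b * lam ^ 2)
    (u : ℝ → ℝ → ℝ)
    (hu : ∀ x t : ℝ, u x t = a0 + 3 * b * lam ^ 2 -
      12 * b * B ^ 2 / (A + B * (x + c * t)) ^ 2) :
    ∀ x t : ℝ, A + B * (x + c * t) ≠ 0 →
      deriv (fun s => u x s) t + u x t * deriv (fun y => u y t) x +
        b * deriv (fun y => deriv (fun z => deriv (fun w => u w t) z) y) x = 0 := by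
  intro x t _
  have hca : c = -(a0 + 3 * b * lam ^ 2) := by rw [hc, hmu]; ring
  show kdvResidual b u x t = 0
  rw [kdvResidual_of_travelingWave (f := rationalProfile (a0 + 3 * b * lam ^ 2) b A B) hu, hca]
  exact rationalProfile_travelingWave_ode _ b A B _

theorem stmt10 (b lam a0 A B mu c : ℝ) (hB : B ≠ 0)
    (hmu : mu = lam ^ 2 / 4) (hc : c = -a0 - 8 * b * mu - b * lam ^ 2)
    (u : ℝ → ℝ → ℝ)
    (hu : ∀ x t : ℝ, u x t = a0 + 3 * b * lam ^ 2 -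
      12 * b * B ^ 2 / (A + B * (x + c * t)) ^ 2) :
    ∀ x t : ℝ, A + B * (x + c * t) ≠ 0 →
      deriv (fun s => u x s) t + u x t * deriv (fun y => u y t) x +
        b * deriv (fun y => deriv (fun z => deriv (fun w => u w t) z) y) x = 0 :=
  stmt10_general b lam a0 A B mu c hmu hc u hu
end

section
/- Let b > 0, λ, μ ∈ ℝ with Δ := 4μ - λ² > 0, and define c = λ²b/2 - 2bμ and u(x,t) = (1/2)√(6b)·√Δ · tan((√Δ/2)(x + ct)). Then at every point where cos((√Δ/2)(x + ct)) ≠ 0, u satisfies u_t - u² u_x + b u_{xxx} = 0. -/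
/-! Since `tan' = 1 + tan ^ 2`, differentiating a polynomial in `tan (α * y + β)` gives again a
polynomial in it (`tanDerivPoly`), so `u_t`, `u_x` and `u_xxx` are explicit polynomials in
`T = tan (k * (x + c * t))`, `k = √Δ / 2`. The residual of the equation is
`k A (1 + T²) (c + 2 b k² + (6 b k² - A²) T²)`, which vanishes because `c = -2 b k²` and
`A² = 6 b k²`. -/

open Real Polynomial Set

noncomputable def tanDerivPoly (α : ℝ) (p : ℝ[X]) : ℝ[X] := C α * (derivative p * (1 + X ^ 2))

theorem Real.hasDerivAt_tan_of_cos_ne_zero {y : ℝ} (h : cos y ≠ 0) :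
    HasDerivAt tan (1 + tan y ^ 2) y := by
  convert hasDerivAt_tan h using 1
  rw [one_div, ← inv_one_add_tan_sq h, inv_inv]

theorem hasDerivAt_eval_tan_affine (p : ℝ[X]) (α β : ℝ) {y : ℝ} (h : cos (α * y + β) ≠ 0) :
    HasDerivAt (fun z => p.eval (tan (α * z + β)))
      ((tanDerivPoly α p).eval (tan (α * y + β))) y := by
  have hinner : HasDerivAt (fun z => α * z + β) α y := by
    simpa using ((hasDerivAt_id y).const_mul α).add_const β
  refine ((p.hasDerivAt _).comp y ((hasDerivAt_tan_of_cos_ne_zero h).comp y hinner)).congr_deriv ?_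
  simp only [tanDerivPoly, Function.comp_apply, eval_mul, eval_C, eval_add, eval_one, eval_pow,
    eval_X]
  ring

theorem iterate_deriv_eval_tan_affine_eqOn (p : ℝ[X]) (α β : ℝ) (n : ℕ) :
    EqOn (deriv^[n] fun z => p.eval (tan (α * z + β)))
      (fun z => ((tanDerivPoly α)^[n] p).eval (tan (α * z + β))) {z | cos (α * z + β) ≠ 0} := by
  have hopen : IsOpen {z | cos (α * z + β) ≠ 0} := isOpen_ne_fun (by fun_prop) continuous_const
  induction n with
  | zero => exact eqOn_refl _ _
  | succ n ih =>
    simp only [Function.iterate_succ_apply']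
    exact (ih.deriv hopen).trans <| deriv_eqOn hopen fun z hz =>
      (hasDerivAt_eval_tan_affine _ α β hz).hasDerivWithinAt

theorem eval_tanDerivPoly_C_mul_X (α A T : ℝ) :
    (tanDerivPoly α (C A * X)).eval T = α * A * (1 + T ^ 2) := by
  simp only [tanDerivPoly, derivative_mul, derivative_C, derivative_X, eval_mul, eval_C, eval_add,
    eval_one, eval_pow, eval_X, eval_zero]
  ring

theorem eval_iterate_three_tanDerivPoly_C_mul_X (α A T : ℝ) :
    ((tanDerivPoly α)^[3] (C A * X)).eval T = 2 * α ^ 3 * A * (1 + T ^ 2) * (1 + 3 * T ^ 2) := by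
  simp only [Function.iterate_succ_apply', Function.iterate_zero_apply, tanDerivPoly,
    derivative_mul, derivative_add, derivative_C, derivative_X, derivative_one, derivative_X_pow,
    derivative_zero, eval_mul, eval_C, eval_add, eval_one, eval_pow, eval_X, eval_zero]
  ring

theorem tan_wave_residual_eq_zero {b k A c T : ℝ} (hc : c = -2 * b * k ^ 2)
    (hA : A ^ 2 = 6 * b * k ^ 2) :
    k * c * A * (1 + T ^ 2) - (A * T) ^ 2 * (k * A * (1 + T ^ 2)) +
      b * (2 * k ^ 3 * A * (1 + T ^ 2) * (1 + 3 * T ^ 2)) = 0 := by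
  linear_combination k * A * (1 + T ^ 2) * hc - k * A * (1 + T ^ 2) * T ^ 2 * hA

theorem stmt12 (b lam mu c : ℝ) (hb : b > 0) (hd : 4 * mu - lam ^ 2 > 0)
    (hc : c = lam ^ 2 * b / 2 - 2 * b * mu)
    (u : ℝ → ℝ → ℝ)
    (hu : ∀ x t : ℝ, u x t = 1 / 2 * Real.sqrt (6 * b) * Real.sqrt (4 * mu - lam ^ 2) *
      Real.tan (Real.sqrt (4 * mu - lam ^ 2) / 2 * (x + c * t))) :
    ∀ x t : ℝ, Real.cos (Real.sqrt (4 * mu - lam ^ 2) / 2 * (x + c * t)) ≠ 0 →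
      deriv (fun s => u x s) t - (u x t) ^ 2 * deriv (fun y => u y t) x +
        b * deriv (fun y => deriv (fun z => deriv (fun w => u w t) z) y) x = 0 := by
  intro x t hx
  set k := √(4 * mu - lam ^ 2) / 2
  set A := 1 / 2 * √(6 * b) * √(4 * mu - lam ^ 2)
  set T := tan (k * (x + c * t))
  have hk : k ^ 2 = (4 * mu - lam ^ 2) / 4 := by
    rw [div_pow, sq_sqrt hd.le]; norm_num
  have hA : A ^ 2 = 6 * b * k ^ 2 := by
    rw [hk, mul_pow, mul_pow, sq_sqrt (by linarith), sq_sqrt hd.le]; ring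
  have hspace : (fun y => u y t) = fun y => (C A * X).eval (tan (k * y + k * c * t)) := by
    ext y; rw [hu]; simp only [eval_mul, eval_C, eval_X]; ring_nf
  have htime : (fun s => u x s) = fun s => (C A * X).eval (tan (k * c * s + k * x)) := by
    ext s; rw [hu]; simp only [eval_mul, eval_C, eval_X]; ring_nf
  have hx_space : k * x + k * c * t = k * (x + c * t) := by ring
  have hx_time : k * c * t + k * x = k * (x + c * t) := by ring
  have hut : deriv (fun s => u x s) t = k * c * A * (1 + T ^ 2) := by
    rw [htime, (hasDerivAt_eval_tan_affine _ _ _ (hx_time ▸ hx)).deriv,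
      eval_tanDerivPoly_C_mul_X, hx_time]
  have hux : deriv (fun y => u y t) x = k * A * (1 + T ^ 2) := by
    rw [hspace, (hasDerivAt_eval_tan_affine _ _ _ (hx_space ▸ hx)).deriv,
      eval_tanDerivPoly_C_mul_X, hx_space]
  have huxxx : deriv (fun y => deriv (fun z => deriv (fun w => u w t) z) y) x =
      2 * k ^ 3 * A * (1 + T ^ 2) * (1 + 3 * T ^ 2) := by
    have h := iterate_deriv_eval_tan_affine_eqOn (C A * X) k (k * c * t) 3 (hx_space ▸ hx)
    beta_reduce at h
    rw [← hspace, eval_iterate_three_tanDerivPoly_C_mul_X, hx_space] at h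
    exact h
  rw [hut, hux, huxxx, hu x t]
  exact tan_wave_residual_eq_zero (by rw [hc, hk]; ring) hA
end

section
/- Let b, λ, μ, a₀ ∈ ℝ with Δ := λ² - 4μ > 0, c := -a₀ - 8bμ - bλ², and U(ξ) := a₀ + 3bλ² - 3bΔ tanh²((√Δ/2)ξ). Then there exists a constant K ∈ ℝ such that cU(ξ) + U(ξ)²/2 + bU''(ξ) = K for all ξ ∈ ℝ. -/
lemma tanh_hasDerivAt (x : ℝ) : HasDerivAt Real.tanh (1 - Real.tanh x ^ 2) x := by
  have h := (Real.hasDerivAt_sinh x).div (Real.hasDerivAt_cosh x) (Real.cosh_pos x).ne'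
  have key : (Real.cosh x * Real.cosh x - Real.sinh x * Real.sinh x) / Real.cosh x ^ 2
      = 1 - Real.tanh x ^ 2 := by
    rw [Real.tanh_eq_sinh_div_cosh]
    have hc := (Real.cosh_pos x).ne'
    have := Real.cosh_sq_sub_sinh_sq x
    field_simp
  have heq : Real.tanh = fun x => Real.sinh x / Real.cosh x := by
    funext y; exact Real.tanh_eq_sinh_div_cosh y
  rw [heq]
  simp only []
  rw [show (Real.sinh x / Real.cosh x) = Real.tanh x from (Real.tanh_eq_sinh_div_cosh x).symm, ← key]
  exact h

theorem stmt18 (b lam mu a0 c : ℝ) (hd : lam ^ 2 - 4 * mu > 0)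
    (hc : c = -a0 - 8 * b * mu - b * lam ^ 2)
    (U : ℝ → ℝ)
    (hUdef : ∀ ξ : ℝ, U ξ = a0 + 3 * b * lam ^ 2 -
      3 * b * (lam ^ 2 - 4 * mu) *
        Real.tanh (Real.sqrt (lam ^ 2 - 4 * mu) / 2 * ξ) ^ 2) :
    ∃ K : ℝ, ∀ ξ : ℝ, c * U ξ + (U ξ) ^ 2 / 2 + b * deriv (deriv U) ξ = K := by
  set D := lam ^ 2 - 4 * mu with hD
  set k := Real.sqrt D / 2 with hk
  have hDsq : (2 * k) ^ 2 = D := by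
    rw [hk]; rw [mul_div_cancel₀]
    · exact Real.sq_sqrt hd.le
    · norm_num
  set A := 3 * b * D with hA
  set t : ℝ → ℝ := fun ξ => Real.tanh (k * ξ) with ht
  have htD : ∀ ξ, HasDerivAt t ((1 - t ξ ^ 2) * k) ξ := by
    intro ξ
    have h := (tanh_hasDerivAt (k * ξ)).comp ξ ((hasDerivAt_id ξ).const_mul k)
    rw [mul_one] at h
    exact h
  -- first derivative of U
  have hU1 : ∀ ξ, HasDerivAt U (-A * (2 * t ξ * ((1 - t ξ ^ 2) * k))) ξ := by
    intro ξ
    have h1 : HasDerivAt (fun ξ => a0 + 3 * b * lam ^ 2 - A * t ξ ^ 2)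
        (-A * (2 * t ξ * ((1 - t ξ ^ 2) * k))) ξ := by
      have := (((htD ξ).pow 2).const_mul A).const_sub (a0 + 3 * b * lam ^ 2)
      refine this.congr_deriv ?_
      norm_num
    have : U = fun ξ => a0 + 3 * b * lam ^ 2 - A * t ξ ^ 2 := by
      funext y; rw [hUdef y]
    rw [this]; exact h1
  have hdU : deriv U = fun ξ => -A * (2 * t ξ * ((1 - t ξ ^ 2) * k)) := by
    funext ξ; exact (hU1 ξ).deriv
  -- second derivative
  have hU2 : ∀ ξ, HasDerivAt (deriv U)
      (-2 * A * k ^ 2 * (1 - t ξ ^ 2) * (1 - 3 * t ξ ^ 2)) ξ := by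
    intro ξ
    rw [hdU]
    have h1 := (htD ξ).sub ((htD ξ).pow 3)
    have h2 := h1.const_mul (-2 * A * k)
    have heq : (fun ξ => -A * (2 * t ξ * ((1 - t ξ ^ 2) * k)))
        = fun ξ => -2 * A * k * (t ξ - t ξ ^ 3) := by
      funext y; ring
    rw [heq]
    refine h2.congr_deriv ?_
    push_cast
    ring
  have hdd : ∀ ξ, deriv (deriv U) ξ = -2 * A * k ^ 2 * (1 - t ξ ^ 2) * (1 - 3 * t ξ ^ 2) :=
    fun ξ => (hU2 ξ).deriv
  have hk2 : k ^ 2 = D / 4 := by nlinarith [hDsq]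
  refine ⟨c * (a0 + 3 * b * lam ^ 2) + (a0 + 3 * b * lam ^ 2) ^ 2 / 2 - 2 * b * A * k ^ 2, ?_⟩
  intro ξ
  rw [hUdef, hdd]
  have htξ : Real.tanh (Real.sqrt (lam ^ 2 - 4 * mu) / 2 * ξ) = t ξ := rfl
  rw [htξ]
  rw [hc, hk2, hA, hD]
  ring
end
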